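/- arXiv:1005.3883 — 2 statements merged into one kernel-verified Lean document; each statement's English description precedes it below -/
import Mathlib

section
/- If ψ : (0, ∞) → (0, ∞) is a concave rate function (concave, increasing, continuous, with limit 0 at 0⁺), then the function t ↦ ψ(√t)² is also a concave rate function. -/
/-!
Write `t = x ^ 2`. The chord slope of `t ↦ ψ (√t) ^ 2` between `a ^ 2` and `b ^ 2` factors as
`(ψ b - ψ a) / (b - a) * ((ψ a + ψ b) / (a + b))`. The first factor is a chord slope of the
increasing concave function `ψ`, so it is nonnegative and decreases along adjacent intervals.
The second is a mediant of `ψ a / a` and `ψ b / b`, and `ψ x / x` is antitone because `ψ` is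
concave with `ψ (0⁺) = 0`; so it decreases as well, and the product of the two decreasing
nonnegative factors is the decreasing slope that characterizes concavity.
-/

open Filter Set Topology

section Mediant

variable {𝕜 : Type*} [Field 𝕜] [LinearOrder 𝕜] [IsStrictOrderedRing 𝕜] {a b c d : 𝕜}

theorem div_le_add_div_add (hb : 0 < b) (hd : 0 < d) (h : c / d ≤ a / b) :
    c / d ≤ (a + c) / (b + d) := by
  rw [div_le_div_iff₀ hd hb] at h
  rw [div_le_div_iff₀ hd (add_pos hb hd)]
  linarith

theorem add_div_add_le_div (hb : 0 < b) (hd : 0 < d) (h : c / d ≤ a / b) :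
    (a + c) / (b + d) ≤ a / b := by
  rw [div_le_div_iff₀ hd hb] at h
  rw [div_le_div_iff₀ (add_pos hb hd) hb]
  linarith

end Mediant

theorem ConcaveOn.antitoneOn_div_self {ψ : ℝ → ℝ} (hconc : ConcaveOn ℝ (Ioi 0) ψ)
    (hlim : Tendsto ψ (𝓝[>] 0) (𝓝 0)) : AntitoneOn (fun x => ψ x / x) (Ioi 0) := by
  intro a (ha : 0 < a) b (hb : 0 < b) hab
  obtain rfl | hab := hab.eq_or_lt
  · rfl
  -- the chord slope over `[a, b]` is bounded by those over `[ε, a]`, which tend to `ψ a / a`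
  have hchord : Tendsto (fun ε => (ψ a - ψ ε) / (a - ε)) (𝓝[>] 0) (𝓝 ((ψ a - 0) / (a - 0))) :=
    (tendsto_const_nhds.sub hlim).div
      (tendsto_const_nhds.sub (tendsto_id.mono_left nhdsWithin_le_nhds)) (by simpa using ha.ne')
  have hslope : (ψ b - ψ a) / (b - a) ≤ ψ a / a := by
    simpa using ge_of_tendsto hchord <| by
      filter_upwards [Ioo_mem_nhdsGT ha] with ε hε
      exact hconc.slope_anti_adjacent hε.1 hb hε.2 hab
  rw [div_le_div_iff₀ (sub_pos.2 hab) ha] at hslope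
  rw [div_le_div_iff₀ hb ha]
  linarith

theorem div_sq_sub_sq_eq_mul {K : Type*} [Field K] (p q a b : K) :
    (p ^ 2 - q ^ 2) / (b ^ 2 - a ^ 2) = (p - q) / (b - a) * ((q + p) / (a + b)) := by
  rw [div_mul_div_comm]
  congr 1 <;> ring

theorem slope_sq_anti_adjacent {ψ : ℝ → ℝ} (hnonneg : ∀ x ∈ Ioi (0:ℝ), 0 ≤ ψ x)
    (hconc : ConcaveOn ℝ (Ioi 0) ψ) (hmono : MonotoneOn ψ (Ioi 0))
    (hratio : AntitoneOn (fun x => ψ x / x) (Ioi 0)) {a b c : ℝ} (ha : 0 < a) (hab : a < b)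
    (hbc : b < c) :
    (ψ c ^ 2 - ψ b ^ 2) / (c ^ 2 - b ^ 2) ≤ (ψ b ^ 2 - ψ a ^ 2) / (b ^ 2 - a ^ 2) := by
  have hb : 0 < b := ha.trans hab
  have hc : 0 < c := hb.trans hbc
  have hslope : (ψ c - ψ b) / (c - b) ≤ (ψ b - ψ a) / (b - a) :=
    hconc.slope_anti_adjacent ha hc hab hbc
  have hslope_nonneg : 0 ≤ (ψ c - ψ b) / (c - b) :=
    div_nonneg (sub_nonneg.2 (hmono hb hc hbc.le)) (sub_pos.2 hbc).le
  have hmediant : (ψ b + ψ c) / (b + c) ≤ (ψ a + ψ b) / (a + b) :=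
    calc (ψ b + ψ c) / (b + c) ≤ ψ b / b := add_div_add_le_div hb hc (hratio hb hc hbc.le)
      _ ≤ (ψ a + ψ b) / (a + b) := div_le_add_div_add ha hb (hratio ha hb hab.le)
  rw [div_sq_sub_sq_eq_mul, div_sq_sub_sq_eq_mul]
  exact mul_le_mul hslope hmediant
    (div_nonneg (add_nonneg (hnonneg b hb) (hnonneg c hc)) (add_pos hb hc).le)
    (hslope_nonneg.trans hslope)

theorem concaveOn_sq_comp_sqrt {ψ : ℝ → ℝ} (hnonneg : ∀ x ∈ Ioi (0:ℝ), 0 ≤ ψ x)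
    (hconc : ConcaveOn ℝ (Ioi 0) ψ) (hmono : MonotoneOn ψ (Ioi 0))
    (hlim : Tendsto ψ (𝓝[>] 0) (𝓝 0)) :
    ConcaveOn ℝ (Ioi 0) (fun t => ψ (√t) ^ 2) := by
  refine concaveOn_of_slope_anti_adjacent (convex_Ioi 0) fun {t u v} (ht : 0 < t) _ htu huv => ?_
  have hu : 0 < u := ht.trans htu
  have h := slope_sq_anti_adjacent hnonneg hconc hmono (hconc.antitoneOn_div_self hlim)
    (Real.sqrt_pos.2 ht) (Real.sqrt_lt_sqrt ht.le htu) (Real.sqrt_lt_sqrt hu.le huv)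
  rwa [Real.sq_sqrt ht.le, Real.sq_sqrt hu.le, Real.sq_sqrt (hu.trans huv).le] at h

theorem Real.mapsTo_sqrt_Ioi_zero : MapsTo Real.sqrt (Ioi 0) (Ioi 0) :=
  fun _ hx => Real.sqrt_pos.2 hx

theorem Real.tendsto_sqrt_nhdsGT_zero : Tendsto (√·) (𝓝[>] 0) (𝓝[>] 0) := by
  simpa using Real.continuous_sqrt.continuousWithinAt.tendsto_nhdsWithin
    Real.mapsTo_sqrt_Ioi_zero (x := 0)

theorem sq_comp_sqrt_concave_rate (ψ : ℝ → ℝ)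
    (hpos : ∀ x ∈ Set.Ioi (0:ℝ), 0 < ψ x)
    (hcont : ContinuousOn ψ (Set.Ioi 0))
    (hconc : ConcaveOn ℝ (Set.Ioi 0) ψ)
    (hmono : MonotoneOn ψ (Set.Ioi 0))
    (hlim : Filter.Tendsto ψ (nhdsWithin 0 (Set.Ioi 0)) (nhds 0)) :
    (∀ x ∈ Set.Ioi (0:ℝ), 0 < (ψ (Real.sqrt x))^2) ∧
    ContinuousOn (fun t => (ψ (Real.sqrt t))^2) (Set.Ioi 0) ∧
    ConcaveOn ℝ (Set.Ioi 0) (fun t => (ψ (Real.sqrt t))^2) ∧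
    MonotoneOn (fun t => (ψ (Real.sqrt t))^2) (Set.Ioi 0) ∧
    Filter.Tendsto (fun t => (ψ (Real.sqrt t))^2) (nhdsWithin 0 (Set.Ioi 0)) (nhds 0) := by
  have hsqrt := Real.mapsTo_sqrt_Ioi_zero
  refine ⟨fun x hx => pow_pos (hpos _ (hsqrt hx)) 2,
    (hcont.comp Real.continuous_sqrt.continuousOn hsqrt).pow 2,
    concaveOn_sq_comp_sqrt (fun x hx => (hpos x hx).le) hconc hmono hlim,
    fun t ht u hu htu => ?_, by simpa using (hlim.comp Real.tendsto_sqrt_nhdsGT_zero).pow 2⟩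
  exact pow_le_pow_left₀ (hpos _ (hsqrt ht)).le
    (hmono (hsqrt ht) (hsqrt hu) (Real.sqrt_le_sqrt htu)) 2
end

section
/- Let Ψ : (0, ∞) → (0, ∞) be concave, strictly increasing, bijective onto (0, ∞), with Ψ(λ)/λ → 0 as λ → ∞. Set ψ̄(t) := 1/√(t · Ψ⁻¹(1/t)) and Θ(t) := √t · ψ̄(t). Then for all s > 0, ψ̄²((Θ²)⁻¹(s)) = s · Ψ(1/s); in particular the function s ↦ ψ̄²((Θ²)⁻¹(s)) is concave on (0, ∞). -/
open Set

/-- At `z = a x + b y`, the point `1/z` is the convex combination of `1/x` and `1/y` with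
weights `a x / z` and `b y / z`. -/
theorem ConcaveOn.mul_comp_inv {f : ℝ → ℝ} (hf : ConcaveOn ℝ (Ioi 0) f) :
    ConcaveOn ℝ (Ioi 0) (fun s => s * f s⁻¹) := by
  refine ⟨convex_Ioi 0, fun x (hx : 0 < x) y (hy : 0 < y) a b ha hb hab => ?_⟩
  have hz : 0 < a * x + b * y := (convex_Ioi (0 : ℝ)) hx hy ha hb hab
  set z := a * x + b * y
  have hweights : a * x / z + b * y / z = 1 := by rw [← add_div, div_self hz.ne']
  have hpoint : (a * x / z) • x⁻¹ + (b * y / z) • y⁻¹ = z⁻¹ := by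
    simp only [smul_eq_mul]
    field_simp
    exact hab
  have hconc := hf.2 (inv_pos.2 hx) (inv_pos.2 hy) (by positivity) (by positivity) hweights
  rw [hpoint] at hconc
  simp only [smul_eq_mul] at hconc ⊢
  calc a * (x * f x⁻¹) + b * (y * f y⁻¹)
      = z * (a * x / z * f x⁻¹ + b * y / z * f y⁻¹) := by field_simp
    _ ≤ z * f z⁻¹ := mul_le_mul_of_nonneg_left hconc hz.le

/-- `s := t ψt²` equals `1/p`, so both sides are `1/(t p)`. -/
theorem sq_eq_mul_apply_one_div {Ψ : ℝ → ℝ} {t p ψt : ℝ} (ht : 0 < t) (hp : 0 < p)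
    (hΨp : Ψ p = 1 / t) (hψt : ψt = 1 / √(t * p)) :
    ψt ^ 2 = t * ψt ^ 2 * Ψ (1 / (t * ψt ^ 2)) := by
  have hsq : ψt ^ 2 = (t * p)⁻¹ := by
    rw [hψt, one_div, inv_pow, Real.sq_sqrt (mul_pos ht hp).le]
  have hs : t * ψt ^ 2 = p⁻¹ := by
    rw [hsq, mul_inv, ← mul_assoc, mul_inv_cancel₀ ht.ne', one_mul]
  rw [hs, one_div, inv_inv, hΨp, hsq, mul_inv, one_div, mul_comm]

theorem psibar_sq_comp_inv_eq_general (Ψ Ψinv Θsqinv : ℝ → ℝ)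
    (hconc : ConcaveOn ℝ (Set.Ioi 0) Ψ)
    (hinv : ∀ t ∈ Set.Ioi (0:ℝ), Ψinv t ∈ Set.Ioi (0:ℝ) ∧ Ψ (Ψinv t) = t)
    (ψbar : ℝ → ℝ)
    (hψbar : ∀ t ∈ Set.Ioi (0:ℝ), ψbar t = 1 / Real.sqrt (t * Ψinv (1 / t)))
    (hΘsqinv : ∀ s ∈ Set.Ioi (0:ℝ),
      Θsqinv s ∈ Set.Ioi (0:ℝ) ∧ Θsqinv s * (ψbar (Θsqinv s))^2 = s) :
    (∀ s ∈ Set.Ioi (0:ℝ), (ψbar (Θsqinv s))^2 = s * Ψ (1 / s)) ∧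
    ConcaveOn ℝ (Set.Ioi 0) (fun s => (ψbar (Θsqinv s))^2) := by
  have hsq : ∀ s ∈ Set.Ioi (0:ℝ), (ψbar (Θsqinv s))^2 = s * Ψ (1 / s) := by
    intro s hs
    obtain ⟨ht, hts⟩ := hΘsqinv s hs
    obtain ⟨hp, hΨp⟩ := hinv _ (one_div_pos.2 (mem_Ioi.1 ht))
    simpa only [hts] using sq_eq_mul_apply_one_div ht hp hΨp (hψbar _ ht)
  exact ⟨hsq, hconc.mul_comp_inv.congr fun s hs => by rw [hsq s hs, one_div]⟩

theorem psibar_sq_comp_inv_eq (Ψ Ψinv Θsqinv : ℝ → ℝ)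
    (hpos : ∀ x ∈ Set.Ioi (0:ℝ), 0 < Ψ x)
    (hconc : ConcaveOn ℝ (Set.Ioi 0) Ψ)
    (hsm : StrictMonoOn Ψ (Set.Ioi 0))
    (hbij : Set.BijOn Ψ (Set.Ioi 0) (Set.Ioi 0))
    (hquot : Filter.Tendsto (fun lam => Ψ lam / lam) Filter.atTop (nhds 0))
    (hinv : ∀ t ∈ Set.Ioi (0:ℝ), Ψinv t ∈ Set.Ioi (0:ℝ) ∧ Ψ (Ψinv t) = t)
    (ψbar : ℝ → ℝ)
    (hψbar : ∀ t ∈ Set.Ioi (0:ℝ), ψbar t = 1 / Real.sqrt (t * Ψinv (1 / t)))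
    (hΘsqinv : ∀ s ∈ Set.Ioi (0:ℝ),
      Θsqinv s ∈ Set.Ioi (0:ℝ) ∧ Θsqinv s * (ψbar (Θsqinv s))^2 = s) :
    (∀ s ∈ Set.Ioi (0:ℝ), (ψbar (Θsqinv s))^2 = s * Ψ (1 / s)) ∧
    ConcaveOn ℝ (Set.Ioi 0) (fun s => (ψbar (Θsqinv s))^2) :=
  psibar_sq_comp_inv_eq_general Ψ Ψinv Θsqinv hconc hinv ψbar hψbar hΘsqinv
end
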